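/- Let M be a von Neumann algebra and let w be a self-adjoint element of M. Let F(z) = z^{−1} sinh(z) = Σ_{n≥0} z^{2n}/(2n+1)!, and let F(ad w) : M → M be the convergent operator series Σ_{n≥0} (ad w)^{2n}/(2n+1)!. Then F(ad w) is a bounded linear operator on M which is invertible in the algebra of bounded operators on M, and F(ad w) restricts to a bijection of the real subspace M_h of self-adjoint elements onto itself. -/

import Mathlib

open scoped ComplexOrder

section Prelude
variable {M : Type*} [CStarAlgebra M]

/-- The absolute value `|z| = (z*z)^{1/2}` of an element of a C*-algebra. -/
noncomputable def oabs (z : M) : M := cfc Real.sqrt (star z * z)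

/-- Real powers `a ^ t` of a (positive invertible) element, via continuous functional calculus. -/
noncomputable def opow (a : M) (t : ℝ) : M := cfc (fun x : ℝ => x ^ t) a

/-- The logarithm of a (positive invertible) element, via continuous functional calculus. -/
noncomputable def olog (a : M) : M := cfc Real.log a

/-- The exponential given by the usual power series. -/
noncomputable def oexp (x : M) : M := NormedSpace.exp x

/-- Positive invertible elements: self-adjoint, invertible, with spectrum in `(0, ∞)`. -/
def IsPosInv (a : M) : Prop :=
  IsSelfAdjoint a ∧ IsUnit a ∧ spectrum ℝ a ⊆ Set.Ioi (0 : ℝ)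

/-- A faithful (normal) tracial state on a von Neumann algebra `M`
(normality, i.e. ultraweak continuity, is not encoded; norm continuity is). -/
structure FiniteTrace (M : Type*) [CStarAlgebra M] where
  toFun : M →ₗ[ℂ] ℂ
  map_one' : toFun 1 = 1
  nonneg' : ∀ x : M, 0 ≤ (toFun (star x * x)).re
  real' : ∀ x : M, (toFun (star x * x)).im = 0
  faithful' : ∀ x : M, toFun (star x * x) = 0 → x = 0
  tracial' : ∀ x y : M, toFun (x * y) = toFun (y * x)
  continuous' : Continuous toFun

/-- The `p`-norm `‖z‖_p = τ(|z|^p)^{1/p}`. -/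
noncomputable def FiniteTrace.pnorm (τ : FiniteTrace M) (p : ℝ) (z : M) : ℝ :=
  (τ.toFun (opow (oabs z) p)).re ^ p⁻¹

/-- Piecewise smooth on `[0,1]`: continuous there, differentiable off a finite set. -/
def PSmooth (γ : ℝ → M) : Prop :=
  ContinuousOn γ (Set.Icc 0 1) ∧
  ∃ s : Finset ℝ, ∀ t ∈ Set.Ioo (0 : ℝ) 1, t ∉ s → DifferentiableAt ℝ γ t

/-- The Finsler `p`-speed `‖γ(t)^{-1/2} γ'(t) γ(t)^{-1/2}‖_p` of a curve in the positive cone. -/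
noncomputable def speed (τ : FiniteTrace M) (p : ℝ) (γ : ℝ → M) (t : ℝ) : ℝ :=
  τ.pnorm p (opow (γ t) (-(1/2 : ℝ)) * deriv γ t * opow (γ t) (-(1/2 : ℝ)))

/-- The Finsler `p`-length of a curve in the positive cone. -/
noncomputable def pLen (τ : FiniteTrace M) (p : ℝ) (γ : ℝ → M) : ℝ :=
  ∫ t in (0:ℝ)..1, speed τ p γ t

/-- The geodesic distance: infimum of `p`-lengths of piecewise smooth curves in the
positive cone joining `a` to `b`. -/
noncomputable def dp (τ : FiniteTrace M) (p : ℝ) (a b : M) : ℝ :=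
  sInf (pLen τ p '' {γ : ℝ → M | PSmooth γ ∧ (∀ t ∈ Set.Icc (0:ℝ) 1, IsPosInv (γ t)) ∧
    γ 0 = a ∧ γ 1 = b})

/-- The geodesic `γ_{a,b}(t) = a^{1/2} (a^{-1/2} b a^{-1/2})^t a^{1/2}`. -/
noncomputable def geo (a b : M) (t : ℝ) : M :=
  opow a (1/2) * opow (opow a (-(1/2 : ℝ)) * b * opow a (-(1/2 : ℝ))) t * opow a (1/2)

end Prelude

/-!
In a complex Banach algebra let `sinhc x = ∑ x^{2n}/(2n+1)!` (the paper's `F`) and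
`cosh x = (exp x + exp (-x))/2`. Comparing coefficients, `sinhc (2x) = sinhc x * cosh x`, the series
form of `sinh 2z = 2 sinh z cosh z`; and `sinhc x` is invertible when `‖x‖ ≤ 1`, since
`‖sinhc x - 1‖ ≤ sinh 1 - 1 < 1`. Halving `x` often enough, `sinhc x` is invertible as soon as
every `cosh (t x)`, `t` real, is.

For `x = ad v` with `v` self-adjoint, `exp (ad v) = L_{e^v} R_{e^{-v}}` in terms of left and right
multiplication, so `cosh (ad v) = ½ L_{e^{-v}} R_{e^{-v}} (L_a + R_a)` with `a = e^{2v}`. The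
spectrum of `a` lies in `(0, ‖a‖]`, so `‖c - a‖ < c` for `c = ‖a‖ + 1`, and
`L_a + R_a = 2c - (L_{c-a} + R_{c-a})` is invertible by a Neumann series.

Finally `ad w (y*) = -(ad w y)*`, so the even series `sinhc (ad w)` commutes with `*`, and so does
its inverse; hence it maps the self-adjoint part onto itself.
-/

open NormedSpace Finset MulOpposite
open scoped Nat

theorem Finset.sum_range_two_mul {R : Type*} [AddCommMonoid R] (f : ℕ → R) (m : ℕ) :
    ∑ k ∈ range (2 * m), f k = ∑ i ∈ range m, (f (2 * i) + f (2 * i + 1)) := by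
  induction m with
  | zero => simp
  | succ m ih => rw [Nat.mul_succ, sum_range_succ, sum_range_succ, sum_range_succ, ih, add_assoc]

theorem Nat.sum_range_choose_odd (n : ℕ) :
    ∑ i ∈ range (n + 1), (2 * n + 1).choose (2 * i + 1) = 4 ^ n := by
  simp_rw [Nat.choose_succ_succ']
  rw [← sum_range_two_mul (fun k => (2 * n).choose k), Nat.mul_succ, sum_range_succ,
    Nat.choose_succ_self, add_zero, Nat.sum_range_choose, pow_mul]
  norm_num

theorem sum_antidiagonal_inv_factorial_odd_mul_even {K : Type*} [Field K] [CharZero K] (n : ℕ) :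
    ∑ ij ∈ antidiagonal n, ((2 * ij.1 + 1)! : K)⁻¹ * ((2 * ij.2)! : K)⁻¹
      = 4 ^ n * ((2 * n + 1)! : K)⁻¹ := by
  rw [Nat.sum_antidiagonal_eq_sum_range_succ_mk]
  have hterm : ∀ i ∈ range (n + 1), ((2 * i + 1)! : K)⁻¹ * ((2 * (n - i))! : K)⁻¹
      = ((2 * n + 1).choose (2 * i + 1) : K) * ((2 * n + 1)! : K)⁻¹ := by
    intro i hi
    have hin : 2 * i + 1 ≤ 2 * n + 1 := by have := mem_range.1 hi; omega
    rw [Nat.cast_choose K hin, show 2 * n + 1 - (2 * i + 1) = 2 * (n - i) by omega]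
    have : ((2 * n + 1)! : K) ≠ 0 := Nat.cast_ne_zero.2 (Nat.factorial_ne_zero _)
    field_simp
  rw [sum_congr rfl hterm, ← sum_mul]
  exact_mod_cast congrArg (fun m : ℕ => (m : K) * ((2 * n + 1)! : K)⁻¹)
    (Nat.sum_range_choose_odd n)

theorem Real.sinh_one_lt_two : Real.sinh 1 < 2 := by
  rw [Real.sinh_eq]
  linarith [Real.exp_one_lt_d9, Real.exp_pos (-1)]

namespace NormedSpace

variable {A : Type*} [NormedRing A] [NormedAlgebra ℂ A]

noncomputable def sinhc (x : A) : A := ∑' n : ℕ, ((2 * n + 1)! : ℂ)⁻¹ • x ^ (2 * n)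

noncomputable def cosh (x : A) : A := (2 : ℂ)⁻¹ • (exp x + exp (-x))

theorem summable_norm_inv_factorial_smul_pow_two_mul (x : A) {g : ℕ → ℕ}
    (hg : ∀ n, n ≤ g n) : Summable fun n => ‖((g n)! : ℂ)⁻¹ • x ^ (2 * n)‖ := by
  refine Summable.of_norm_bounded_eventually_nat (Real.summable_pow_div_factorial (‖x‖ ^ 2)) ?_
  filter_upwards [Filter.eventually_ne_atTop 0] with n hn
  rw [norm_norm, norm_smul, norm_inv, Complex.norm_natCast, ← pow_mul, div_eq_inv_mul]
  gcongr
  · exact hg n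
  · exact norm_pow_le' x (by omega)

variable [CompleteSpace A]

theorem summable_sinhc (x : A) : Summable fun n => ((2 * n + 1)! : ℂ)⁻¹ • x ^ (2 * n) :=
  (summable_norm_inv_factorial_smul_pow_two_mul x (g := (2 * · + 1)) fun n => by omega).of_norm

theorem hasSum_cosh (x : A) : HasSum (fun n => ((2 * n)! : ℂ)⁻¹ • x ^ (2 * n)) (cosh x) := by
  have hexp := ((exp_series_hasSum_exp' (𝕂 := ℂ) x).add
    (exp_series_hasSum_exp' (𝕂 := ℂ) (-x))).const_smul (2⁻¹ : ℂ)
  have hodd : ∀ n ∉ Set.range (2 * ·),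
      (2⁻¹ : ℂ) • ((n ! : ℂ)⁻¹ • x ^ n + (n ! : ℂ)⁻¹ • (-x) ^ n) = 0 := by
    intro n hn
    have hn : Odd n := Nat.not_even_iff_odd.1 fun ⟨k, hk⟩ => hn ⟨k, by dsimp only; omega⟩
    rw [hn.neg_pow, smul_neg, add_neg_cancel, smul_zero]
  rw [cosh]
  convert (Function.Injective.hasSum_iff (mul_right_injective₀ two_ne_zero) hodd).2 hexp using 1
  funext n
  simp only [Function.comp_apply, (even_two_mul n).neg_pow, ← two_smul ℂ, smul_smul]
  congr 1
  ring

theorem sinhc_two_smul (x : A) : sinhc ((2 : ℂ) • x) = sinhc x * cosh x := by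
  rw [sinhc, sinhc, (hasSum_cosh x).tsum_eq.symm,
    tsum_mul_tsum_eq_tsum_sum_antidiagonal_of_summable_norm
      (summable_norm_inv_factorial_smul_pow_two_mul x fun n => by omega)
      (summable_norm_inv_factorial_smul_pow_two_mul x fun n => by omega)]
  refine tsum_congr fun n => ?_
  have hterm : ∀ ij ∈ antidiagonal n, (((2 * ij.1 + 1)! : ℂ)⁻¹ • x ^ (2 * ij.1)) *
      (((2 * ij.2)! : ℂ)⁻¹ • x ^ (2 * ij.2))
        = (((2 * ij.1 + 1)! : ℂ)⁻¹ * ((2 * ij.2)! : ℂ)⁻¹) • x ^ (2 * n) := by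
    intro ij hij
    rw [smul_mul_smul, ← pow_add, ← mul_add, mem_antidiagonal.1 hij]
  rw [sum_congr rfl hterm, ← sum_smul, sum_antidiagonal_inv_factorial_odd_mul_even, smul_pow,
    smul_smul, pow_mul]
  norm_num [mul_comm]

theorem norm_sinhc_sub_one_lt_one {x : A} (hx : ‖x‖ ≤ 1) : ‖sinhc x - 1‖ < 1 := by
  have htail : HasSum (fun n : ℕ => ((2 * (n + 1) + 1)! : ℝ)⁻¹) (Real.sinh 1 - 1) := by
    simpa [div_eq_inv_mul] using (hasSum_nat_add_iff' 1).2 (Real.hasSum_sinh 1)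
  rw [sinhc, (summable_sinhc x).tsum_eq_zero_add]
  simp only [mul_zero, zero_add, Nat.factorial_one, Nat.cast_one, inv_one, pow_zero, one_smul,
    add_sub_cancel_left]
  refine (tsum_of_norm_bounded htail fun n => ?_).trans_lt (by linarith [Real.sinh_one_lt_two])
  rw [norm_smul, norm_inv, Complex.norm_natCast]
  refine mul_le_of_le_one_right (by positivity) ((norm_pow_le' x (by omega)).trans ?_)
  exact pow_le_one₀ (norm_nonneg x) hx

theorem isUnit_sinhc_of_norm_le_one {x : A} (hx : ‖x‖ ≤ 1) : IsUnit (sinhc x) := by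
  simpa using isUnit_one_sub_of_norm_lt_one (x := 1 - sinhc x)
    (by rw [norm_sub_rev]; exact norm_sinhc_sub_one_lt_one hx)

theorem isUnit_sinhc_of_forall_isUnit_cosh {x : A}
    (hcosh : ∀ t : ℝ, IsUnit (cosh ((t : ℂ) • x))) : IsUnit (sinhc x) := by
  obtain ⟨N, hN⟩ := pow_unbounded_of_one_lt ‖x‖ one_lt_two
  induction N generalizing x with
  | zero => exact isUnit_sinhc_of_norm_le_one (by simpa using hN.le)
  | succ N ih =>
    have hhalf : x = (2 : ℂ) • ((2⁻¹ : ℝ) : ℂ) • x := by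
      rw [smul_smul]; norm_num
    rw [hhalf, sinhc_two_smul]
    refine (ih (fun t => ?_) ?_).mul (hcosh _)
    · simpa [smul_smul] using hcosh (t * 2⁻¹)
    · calc ‖((2⁻¹ : ℝ) : ℂ) • x‖ = 2⁻¹ * ‖x‖ := by
            rw [norm_smul, Complex.norm_real]; norm_num
        _ < 2 ^ N := by rw [pow_succ] at hN; linarith

end NormedSpace

section Operators

variable {E : Type*} [NormedAddCommGroup E] [NormedSpace ℂ E] [CompleteSpace E]

theorem sinhc_apply (T : E →L[ℂ] E) (y : E) :
    sinhc T y = ∑' n : ℕ, ((2 * n + 1)! : ℂ)⁻¹ • (⇑T)^[2 * n] y := by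
  rw [sinhc, ← ContinuousLinearMap.apply_apply (𝕜 := ℂ) y,
    ContinuousLinearMap.map_tsum _ (summable_sinhc T)]
  simp

theorem sinhc_apply_star [StarAddMonoid E] [StarModule ℂ E] [ContinuousStar E] {T : E →L[ℂ] E}
    (hT : ∀ y, T (star y) = -star (T y)) (y : E) :
    sinhc T (star y) = star (sinhc T y) := by
  have hT2 : Function.Commute (⇑T)^[2] star := fun y => by
    simp only [Function.iterate_succ, Function.iterate_zero, Function.comp_apply, hT, map_neg,
      neg_neg, Function.id_comp]
  rw [sinhc_apply, sinhc_apply, tsum_star]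
  refine tsum_congr fun n => ?_
  rw [star_smul, Function.iterate_mul, (hT2.iterate_left n).eq, star_inv₀, star_natCast]

end Operators

section MulLeftRight

variable {A : Type*} [NormedRing A] [NormedAlgebra ℂ A]

noncomputable def mulLeft : A →+* (A →L[ℂ] A) where
  toFun := ContinuousLinearMap.mul ℂ A
  map_one' := ContinuousLinearMap.ext one_mul
  map_mul' a b := ContinuousLinearMap.ext (mul_assoc a b)
  map_zero' := map_zero _
  map_add' := map_add _

noncomputable def mulRight : Aᵐᵒᵖ →+* (A →L[ℂ] A) where
  toFun a := (ContinuousLinearMap.mul ℂ A).flip a.unop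
  map_one' := ContinuousLinearMap.ext mul_one
  map_mul' a b := ContinuousLinearMap.ext fun y => (mul_assoc y b.unop a.unop).symm
  map_zero' := by simp
  map_add' a b := by simp

@[simp] theorem mulLeft_apply (a y : A) : mulLeft a y = a * y := rfl

@[simp] theorem mulRight_apply (a : Aᵐᵒᵖ) (y : A) : mulRight a y = y * a.unop := rfl

theorem norm_mulLeft_le (a : A) : ‖mulLeft a‖ ≤ ‖a‖ :=
  ContinuousLinearMap.opNorm_mul_apply_le ℂ A a

theorem norm_mulRight_le (a : A) : ‖mulRight (op a)‖ ≤ ‖a‖ :=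
  ContinuousLinearMap.opNorm_le_bound _ (norm_nonneg a) fun y => by
    rw [mulRight_apply, unop_op, mul_comm ‖a‖]; exact norm_mul_le y a

theorem commute_mulLeft_mulRight (a : A) (b : Aᵐᵒᵖ) : Commute (mulLeft a) (mulRight b) :=
  ContinuousLinearMap.ext fun y => (mul_assoc a y b.unop).symm

noncomputable def ad (v : A) : A →L[ℂ] A := mulLeft v - mulRight (op v)

theorem coe_ad (v : A) : ⇑(ad v) = fun y => v * y - y * v := rfl

theorem ad_smul (c : ℂ) (v : A) : ad (c • v) = c • ad v :=
  ContinuousLinearMap.ext fun y => by simp [coe_ad, smul_sub]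

theorem ad_neg (v : A) : ad (-v) = -ad v := by
  rw [← neg_one_smul ℂ v, ad_smul, neg_one_smul ℂ (ad v)]

theorem ad_apply_star [StarRing A] {v : A} (hv : IsSelfAdjoint v) (y : A) :
    ad v (star y) = -star (ad v y) := by
  simp only [coe_ad, star_sub, star_mul, hv.star_eq, neg_sub]

variable [CompleteSpace A]

theorem exp_mulLeft (a : A) : exp (mulLeft a) = mulLeft (exp a) := by
  -- The `exp` API wants `ℚ`-algebras; the value of `exp` does not depend on the one chosen.
  let +nondep : NormedAlgebra ℚ A := .restrictScalars ℚ ℂ A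
  let +nondep : NormedAlgebra ℚ (A →L[ℂ] A) := .restrictScalars ℚ ℂ _
  exact (map_exp mulLeft (ContinuousLinearMap.mul ℂ A).continuous a).symm

theorem exp_mulRight (a : A) : exp (mulRight (op a)) = mulRight (op (exp a)) := by
  let +nondep : NormedAlgebra ℚ A := .restrictScalars ℚ ℂ A
  let +nondep : NormedAlgebra ℚ (A →L[ℂ] A) := .restrictScalars ℚ ℂ _
  rw [← exp_op,
    map_exp mulRight ((ContinuousLinearMap.mul ℂ A).flip.continuous.comp continuous_unop)]

theorem exp_ad (v : A) : exp (ad v) = mulLeft (exp v) * mulRight (op (exp (-v))) := by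
  let +nondep : NormedAlgebra ℚ (A →L[ℂ] A) := .restrictScalars ℚ ℂ _
  rw [ad, sub_eq_add_neg, ← map_neg mulRight, ← op_neg,
    exp_add_of_commute (commute_mulLeft_mulRight _ _), exp_mulLeft, exp_mulRight]

end MulLeftRight

section CStarAlgebra

variable {M : Type*} [CStarAlgebra M]

theorem spectrum_exp_subset_Ioi {s : M} (hs : IsSelfAdjoint s) :
    spectrum ℝ (exp s) ⊆ Set.Ioi 0 := by
  rw [← CFC.real_exp_eq_normedSpace_exp, cfc_map_spectrum Real.exp s]
  rintro _ ⟨x, -, rfl⟩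
  exact Real.exp_pos x

theorem isUnit_mulLeft_add_mulRight {a : M} (ha : IsSelfAdjoint a)
    (hspec : spectrum ℝ a ⊆ Set.Ioi 0) : IsUnit (mulLeft a + mulRight (op a)) := by
  nontriviality M
  set c : ℝ := ‖a‖ + 1
  set b : M := algebraMap ℝ M c - a
  have hb : ‖b‖ < c := by
    have hcfc : cfc (fun x : ℝ => c - x) a = b := by
      rw [cfc_sub _ _ a, cfc_const c a, cfc_id' ℝ a]
    rw [← hcfc]
    refine norm_cfc_lt (by positivity) fun x hx => ?_
    have hx_pos : 0 < x := hspec hx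
    have hx_le : x ≤ ‖a‖ := (le_abs_self x).trans (spectrum.norm_le_norm_of_mem hx)
    rw [Real.norm_eq_abs, abs_lt]
    constructor <;> linarith
  have hsum : mulLeft a + mulRight (op a)
      = algebraMap ℂ (M →L[ℂ] M) ((2 * c : ℝ) : ℂ) - (mulLeft b + mulRight (op b)) := by
    ext y
    simp only [b, add_apply, sub_apply, mulLeft_apply, mulRight_apply, unop_op,
      Algebra.algebraMap_eq_smul_one, smul_apply, one_apply_eq_self, sub_mul, mul_sub,
      smul_mul_assoc, mul_smul_comm, one_mul, mul_one, Complex.coe_smul, two_mul, add_smul]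
    abel
  rw [hsum]
  refine spectrum.mem_resolventSet_of_norm_lt ?_
  calc ‖mulLeft b + mulRight (op b)‖ ≤ ‖b‖ + ‖b‖ :=
        (norm_add_le _ _).trans (add_le_add (norm_mulLeft_le b) (norm_mulRight_le b))
    _ < ‖((2 * c : ℝ) : ℂ)‖ := by
        rw [Complex.norm_real, Real.norm_of_nonneg (by positivity)]
        linarith

theorem isUnit_cosh_ad {v : M} (hv : IsSelfAdjoint v) : IsUnit (cosh (ad v)) := by
  let +nondep : NormedAlgebra ℚ M := .restrictScalars ℚ ℂ M
  have hinv_left : ∀ z, exp (-v) * (exp v * z) = z := fun z => by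
    rw [← mul_assoc, ← exp_add_of_commute (Commute.refl v).neg_left, neg_add_cancel, exp_zero,
      one_mul]
  have hinv_right : exp v * exp (-v) = 1 := by
    rw [← exp_add_of_commute (Commute.refl v).neg_right, add_neg_cancel, exp_zero]
  have hfactor : cosh (ad v) = algebraMap ℂ _ (2⁻¹ : ℂ) *
      (mulLeft (exp (-v)) * mulRight (op (exp (-v))) *
        (mulLeft (exp (v + v)) + mulRight (op (exp (v + v))))) := by
    rw [cosh, ← ad_neg, exp_ad, exp_ad, neg_neg, exp_add_of_commute (Commute.refl v),
      Algebra.smul_def]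
    congr 1
    ext y
    simp [mul_add, mul_assoc, hinv_left, hinv_right]
  have hsum := isUnit_mulLeft_add_mulRight (hv.add hv).exp (spectrum_exp_subset_Ioi (hv.add hv))
  rw [hfactor]
  exact ((isUnit_iff_ne_zero.2 (by norm_num)).map _).mul
    ((((isUnit_exp _).map mulLeft).mul ((isUnit_exp _).op.map mulRight)).mul hsum)

theorem isUnit_sinhc_ad {w : M} (hw : IsSelfAdjoint w) : IsUnit (sinhc (ad w)) :=
  isUnit_sinhc_of_forall_isUnit_cosh fun t => by
    rw [← ad_smul, Complex.coe_smul]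
    exact isUnit_cosh_ad (.smul (.all t) hw)

end CStarAlgebra

theorem Function.Bijective.bijOn_setOf_isSelfAdjoint {E : Type*} [Star E] {f : E → E}
    (hf : Function.Bijective f) (hstar : ∀ y, f (star y) = star (f y)) :
    Set.BijOn f {a | IsSelfAdjoint a} {a | IsSelfAdjoint a} := by
  refine ⟨fun a (ha : star a = a) => ?_, hf.injective.injOn, fun b (hb : star b = b) => ?_⟩
  · show star (f a) = f a
    rw [← hstar, ha]
  · obtain ⟨a, rfl⟩ := hf.surjective b
    exact ⟨a, hf.injective (by rw [hstar, hb]), rfl⟩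

/-- for self-adjoint `w`, the operator `F(ad w) = Σ (ad w)^{2n}/(2n+1)!` is a
bounded invertible operator on `M` restricting to a bijection of the self-adjoint part. -/
theorem F_ad_bounded_invertible_bijOn_selfAdjoint
    {M : Type*} [CStarAlgebra M] (w : M) (hw : IsSelfAdjoint w) :
    ∃ T : M →L[ℂ] M,
      (∀ y : M, T y = ∑' n : ℕ, (((2 * n + 1).factorial : ℂ))⁻¹ •
          (fun z : M => w * z - z * w)^[2 * n] y) ∧
      (∃ S : M →L[ℂ] M, T.comp S = ContinuousLinearMap.id ℂ M ∧
          S.comp T = ContinuousLinearMap.id ℂ M) ∧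
      Set.BijOn (fun y : M => T y) {a : M | IsSelfAdjoint a} {a : M | IsSelfAdjoint a} := by
  obtain ⟨u, hu⟩ := isUnit_sinhc_ad hw
  refine ⟨sinhc (ad w), sinhc_apply (ad w), ⟨↑u⁻¹, ?_, ?_⟩,
    (ContinuousLinearMap.isUnit_iff_bijective.1 ⟨u, hu⟩).bijOn_setOf_isSelfAdjoint
      (sinhc_apply_star (ad_apply_star hw))⟩
  · rw [← hu]; exact u.mul_inv
  · rw [← hu]; exact u.inv_mul
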